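/- Let A and B be n×n complex matrices. There exists a nonzero n×n matrix H with A*H - H*B = 0 if and only if the spectra of A and B intersect, i.e. A and B have a common eigenvalue. -/

import Mathlib

open Polynomial Matrix

lemma eval_charpoly_aux {n : ℕ} (M : Matrix (Fin n) (Fin n) ℂ) (μ : ℂ) :
    (M.charpoly).eval μ = (algebraMap ℂ (Matrix (Fin n) (Fin n) ℂ) μ - M).det := by
  rw [Matrix.charpoly, eval_det, matPolyEquiv_charmatrix]
  congr 1
  simp only [eval_sub, eval_X, eval_C]
  congr 1

lemma intertwine_aeval {n : ℕ} (A B H : Matrix (Fin n) (Fin n) ℂ)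
    (h : A * H = H * B) (p : ℂ[X]) :
    (aeval A p) * H = H * (aeval B p) := by
  have hpow : ∀ k : ℕ, A ^ k * H = H * B ^ k := by
    intro k
    induction k with
    | zero => simp
    | succ k ih =>
      calc A ^ (k+1) * H = A ^ k * (A * H) := by rw [pow_succ, mul_assoc]
      _ = A ^ k * H * B := by rw [h, mul_assoc]
      _ = H * B ^ (k+1) := by rw [ih, pow_succ, mul_assoc]
  induction p using Polynomial.induction_on' with
  | add p q hp hq => simp [map_add, add_mul, mul_add, hp, hq]
  | monomial k a =>
    simp only [aeval_monomial]
    rw [mul_assoc, hpow k, ← mul_assoc, ← mul_assoc]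
    congr 1
    rw [Algebra.commutes]

/-- Sylvester (1884): there is a nonzero `H` with `A*H - H*B = 0` iff
the spectra of `A` and `B` intersect. -/
theorem sylvester_common_eigenvalue {n : ℕ} (A B : Matrix (Fin n) (Fin n) ℂ) :
    (∃ H : Matrix (Fin n) (Fin n) ℂ, H ≠ 0 ∧ A * H - H * B = 0) ↔
      (spectrum ℂ A ∩ spectrum ℂ B).Nonempty := by
  constructor
  · rintro ⟨H, hH, heq⟩
    have hAH : A * H = H * B := sub_eq_zero.mp heq
    rcases Nat.eq_zero_or_pos n with hn | hn
    · subst hn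
      exact absurd (Subsingleton.elim H 0) hH
    by_contra hdisj
    -- S := aeval A (charpoly B) kills H and is a unit
    set S := aeval A B.charpoly with hS
    have hSH : S * H = 0 := by
      rw [hS, intertwine_aeval A B H hAH, Matrix.aeval_self_charpoly, mul_zero]
    have hunit : IsUnit S := by
      by_contra hnu
      have h0 : (0 : ℂ) ∈ spectrum ℂ S := (spectrum.zero_mem_iff (R := ℂ)).mpr hnu
      have hdeg : 0 < B.charpoly.degree := by
        rw [Matrix.charpoly_degree_eq_dim]
        simpa [Fintype.card_fin] using (Nat.cast_pos (α := WithBot ℕ)).mpr hn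
      rw [hS, spectrum.map_polynomial_aeval_of_degree_pos A B.charpoly hdeg] at h0
      obtain ⟨μ, hμA, hμ0⟩ := h0
      have hμB : μ ∈ spectrum ℂ B := by
        rw [spectrum.mem_iff]
        intro hun
        rw [Matrix.isUnit_iff_isUnit_det] at hun
        have hμ0' : eval μ B.charpoly = 0 := hμ0
        rw [eval_charpoly_aux B μ] at hμ0'
        rw [hμ0'] at hun
        exact (not_isUnit_zero hun)
      exact hdisj ⟨μ, hμA, hμB⟩
    obtain ⟨u, hu⟩ := hunit
    apply hH
    calc H = ↑u⁻¹ * (S * H) := by rw [← hu, ← mul_assoc, Units.inv_mul, one_mul]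
    _ = 0 := by rw [hSH, mul_zero]
  · rintro ⟨μ, hμA, hμB⟩
    -- eigenvector v of A, left eigenvector w of B
    have hdetA : (algebraMap ℂ (Matrix (Fin n) (Fin n) ℂ) μ - A).det = 0 := by
      by_contra h
      exact (spectrum.mem_iff.mp hμA) ((Matrix.isUnit_iff_isUnit_det _).mpr (isUnit_iff_ne_zero.mpr h))
    have hdetB : ((algebraMap ℂ (Matrix (Fin n) (Fin n) ℂ) μ - B)ᵀ).det = 0 := by
      rw [Matrix.det_transpose]
      by_contra h
      exact (spectrum.mem_iff.mp hμB) ((Matrix.isUnit_iff_isUnit_det _).mpr (isUnit_iff_ne_zero.mpr h))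
    obtain ⟨v, hv, hAv⟩ := (Matrix.exists_mulVec_eq_zero_iff).mpr hdetA
    obtain ⟨w, hw, hBw⟩ := (Matrix.exists_mulVec_eq_zero_iff).mpr hdetB
    have hAv' : A.mulVec v = μ • v := by
      have := hAv
      simp only [Matrix.sub_mulVec, sub_eq_zero] at this
      rw [← this]
      simp [Algebra.algebraMap_eq_smul_one, Matrix.smul_mulVec, Matrix.one_mulVec]
    have hBw' : Bᵀ.mulVec w = μ • w := by
      have := hBw
      simp only [Matrix.transpose_sub, Matrix.sub_mulVec, sub_eq_zero] at this
      rw [← this]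
      have : (algebraMap ℂ (Matrix (Fin n) (Fin n) ℂ) μ)ᵀ = algebraMap ℂ _ μ := by
        simp [Algebra.algebraMap_eq_smul_one, Matrix.transpose_smul]
      rw [this]
      simp [Algebra.algebraMap_eq_smul_one, Matrix.smul_mulVec, Matrix.one_mulVec]
    -- H = v ⬝ wᵀ (outer product)
    refine ⟨Matrix.of (fun i j => v i * w j), ?_, ?_⟩
    · obtain ⟨i, hi⟩ := Function.ne_iff.mp hv
      obtain ⟨j, hj⟩ := Function.ne_iff.mp hw
      intro h0
      have := congrFun (congrFun h0 i) j
      simp only [Matrix.of_apply, Matrix.zero_apply] at this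
      exact (mul_ne_zero hi hj) this
    · ext i j
      have h1 : ∑ k, A i k * (v k * w j) = (A.mulVec v i) * w j := by
        simp [Matrix.mulVec, dotProduct, Finset.sum_mul, mul_assoc]
      have h2 : ∑ k, v i * w k * B k j = v i * (Bᵀ.mulVec w j) := by
        simp [Matrix.mulVec, dotProduct, Matrix.transpose_apply, Finset.mul_sum]
        congr 1; ext k; ring
      simp only [Matrix.sub_apply, Matrix.mul_apply, Matrix.of_apply, Matrix.zero_apply]
      rw [h1, h2, hAv', hBw']
      simp [Pi.smul_apply, smul_eq_mul]
      ring
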